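/- In LR-Subtraction Nim with a finite nonempty S ⊆ ℤ≥2, there is no A such that the outcome sequence for n ≥ A alternates between the values L and N with period 2 (with both values actually occurring). Consequently, if the outcome sequence has minimum eventual period 2, the two alternating outcomes must be L and R. -/
import Mathlib


open scoped Classical

inductive Outcome : Type
  | L | R | N | P
deriving DecidableEq

/-- Outcome determined from the set of outcomes of the options of a non-terminal position. -/
noncomputable def fromOptions (T : Set Outcome) : Outcome :=
  if Outcome.L ∈ T ∧ T ⊆ {Outcome.L, Outcome.N} then Outcome.L
  else if Outcome.R ∈ T ∧ T ⊆ {Outcome.R, Outcome.N} then Outcome.R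
  else if T = {Outcome.N} then Outcome.P
  else Outcome.N

/-- Outcome of Ending Partizan Subtraction Nim with removable set `S ⊆ ℤ≥2` and
terminal assignment `W`. -/
noncomputable def epOutcome (S : Set ℕ) (hS : ∀ s ∈ S, 2 ≤ s) (W : ℕ → Outcome) : ℕ → Outcome :=
  fun n => Nat.strongRecOn n (fun n ih =>
    if ∃ s ∈ S, s ≤ n then
      fromOptions {o | ∃ s, ∃ hs : s ∈ S, ∃ hsn : s ≤ n,
        o = ih (n - s) (by have := hS s hs; omega)}
    else W n)

/-- Outcome of `LR`-Subtraction Nim: at a terminal position, Left wins if the number of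
remaining tokens is even, Right wins if it is odd. -/
noncomputable def lrOutcome (S : Set ℕ) (hS : ∀ s ∈ S, 2 ≤ s) : ℕ → Outcome :=
  epOutcome S hS (fun n => if Even n then Outcome.L else Outcome.R)


section Aux

variable (S : Set ℕ) (hS : ∀ s ∈ S, 2 ≤ s)

lemma lr_eq (n : ℕ) :
    lrOutcome S hS n =
      if ∃ s ∈ S, s ≤ n then
        fromOptions {o | ∃ s ∈ S, s ≤ n ∧ o = lrOutcome S hS (n - s)}
      else (if Even n then Outcome.L else Outcome.R) := by
  conv_lhs => rw [lrOutcome, epOutcome]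
  rw [Nat.strongRecOn_eq]
  split_ifs with h
  · congr 1
    ext o
    constructor
    · rintro ⟨s, hs, hsn, rfl⟩; exact ⟨s, hs, hsn, rfl⟩
    · rintro ⟨s, hs, hsn, rfl⟩; exact ⟨s, hs, hsn, rfl⟩
  all_goals rfl

lemma lr_term {n : ℕ} (h : ¬ ∃ s ∈ S, s ≤ n) :
    lrOutcome S hS n = if Even n then Outcome.L else Outcome.R := by
  rw [lr_eq, if_neg h]

lemma lr_nonterm {n : ℕ} (h : ∃ s ∈ S, s ≤ n) :
    lrOutcome S hS n =
      fromOptions {o | ∃ s ∈ S, s ≤ n ∧ o = lrOutcome S hS (n - s)} := by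
  rw [lr_eq, if_pos h]

lemma optSet_nonempty {n : ℕ} (h : ∃ s ∈ S, s ≤ n) :
    {o | ∃ s ∈ S, s ≤ n ∧ o = lrOutcome S hS (n - s)}.Nonempty := by
  obtain ⟨s, hs, hsn⟩ := h
  exact ⟨lrOutcome S hS (n - s), s, hs, hsn, rfl⟩

end Aux

section FO

lemma fo_LN (T : Set Outcome) (hne : T.Nonempty) :
    (fromOptions T = Outcome.L ∨ fromOptions T = Outcome.P) ↔
      T ⊆ {Outcome.L, Outcome.N} := by
  constructor
  · intro h
    unfold fromOptions at h
    split_ifs at h with h1 h2 h3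
    · exact h1.2
    · exact (h.elim id id).elim
    · rw [h3]; intro x hx; rw [Set.mem_singleton_iff] at hx; rw [hx]; right; rfl
    · exact (h.elim id id).elim
  · intro hsub
    unfold fromOptions
    split_ifs with h1 h2 h3
    · left; rfl
    · exfalso
      have := hsub h2.1
      rcases this with h | h <;> exact Outcome.noConfusion h
    · right; rfl
    · exfalso
      apply h3
      have hL : Outcome.L ∉ T := fun hL => h1 ⟨hL, hsub⟩
      ext x
      constructor
      · intro hx
        rcases hsub hx with h | h
        · exact absurd (h ▸ hx) hL
        · exact h
      · intro hx
        rw [Set.mem_singleton_iff] at hx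
        obtain ⟨y, hy⟩ := hne
        rcases hsub hy with h | h
        · exact absurd (h ▸ hy) hL
        · rw [hx]; rw [Set.mem_singleton_iff] at h; exact h ▸ hy

lemma fo_RN (T : Set Outcome) (hne : T.Nonempty) :
    (fromOptions T = Outcome.R ∨ fromOptions T = Outcome.P) ↔
      T ⊆ {Outcome.R, Outcome.N} := by
  constructor
  · intro h
    unfold fromOptions at h
    split_ifs at h with h1 h2 h3
    · exact (h.elim id id).elim
    · exact h2.2
    · rw [h3]; intro x hx; rw [Set.mem_singleton_iff] at hx; rw [hx]; right; rfl
    · exact (h.elim id id).elim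
  · intro hsub
    unfold fromOptions
    split_ifs with h1 h2 h3
    · exfalso
      have := hsub h1.1
      rcases this with h | h <;> exact Outcome.noConfusion h
    · left; rfl
    · right; rfl
    · exfalso
      apply h3
      have hR : Outcome.R ∉ T := fun hR => h2 ⟨hR, hsub⟩
      ext x
      constructor
      · intro hx
        rcases hsub hx with h | h
        · exact absurd (h ▸ hx) hR
        · exact h
      · intro hx
        rw [Set.mem_singleton_iff] at hx
        obtain ⟨y, hy⟩ := hne
        rcases hsub hy with h | h
        · exact absurd (h ▸ hy) hR
        · rw [hx]; rw [Set.mem_singleton_iff] at h; exact h ▸ hy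

lemma fo_ne_N (T : Set Outcome) (hne : T.Nonempty)
    (hsub : T ⊆ {Outcome.L, Outcome.N}) : fromOptions T ≠ Outcome.N := by
  rcases (fo_LN T hne).mpr hsub with h | h <;> rw [h] <;> decide

lemma fo_singL : fromOptions {Outcome.L} = Outcome.L := by
  unfold fromOptions
  rw [if_pos ⟨rfl, by intro x hx; rw [Set.mem_singleton_iff] at hx; rw [hx]; left; rfl⟩]

lemma fo_singR : fromOptions {Outcome.R} = Outcome.R := by
  unfold fromOptions
  rw [if_neg, if_pos ⟨rfl, by intro x hx; rw [Set.mem_singleton_iff] at hx; rw [hx]; left; rfl⟩]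
  rintro ⟨h, -⟩
  rw [Set.mem_singleton_iff] at h
  exact Outcome.noConfusion h

lemma fo_singN : fromOptions {Outcome.N} = Outcome.P := by
  unfold fromOptions
  rw [if_neg, if_neg, if_pos rfl]
  · rintro ⟨h, -⟩; rw [Set.mem_singleton_iff] at h; exact Outcome.noConfusion h
  · rintro ⟨h, -⟩; rw [Set.mem_singleton_iff] at h; exact Outcome.noConfusion h

lemma fo_singP : fromOptions {Outcome.P} = Outcome.N := by
  unfold fromOptions
  rw [if_neg, if_neg, if_neg]
  · intro h
    have : Outcome.P ∈ ({Outcome.N} : Set Outcome) := h ▸ rfl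
    rw [Set.mem_singleton_iff] at this
    exact Outcome.noConfusion this
  · rintro ⟨h, -⟩; rw [Set.mem_singleton_iff] at h; exact Outcome.noConfusion h
  · rintro ⟨h, -⟩; rw [Set.mem_singleton_iff] at h; exact Outcome.noConfusion h

end FO

section Char

variable (S : Set ℕ) (hS : ∀ s ∈ S, 2 ≤ s)

lemma lr_LP_iff {n : ℕ} (h : ∃ s ∈ S, s ≤ n) :
    (lrOutcome S hS n = Outcome.L ∨ lrOutcome S hS n = Outcome.P) ↔
      ∀ s ∈ S, s ≤ n →
        (lrOutcome S hS (n - s) = Outcome.L ∨ lrOutcome S hS (n - s) = Outcome.N) := by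
  rw [lr_nonterm S hS h, fo_LN _ (optSet_nonempty S hS h)]
  constructor
  · intro hsub s hs hsn
    have := hsub ⟨s, hs, hsn, rfl⟩
    rcases this with h' | h'
    · left; exact h'
    · right; rwa [Set.mem_singleton_iff] at h'
  · rintro h' o ⟨s, hs, hsn, rfl⟩
    rcases h' s hs hsn with h'' | h''
    · left; exact h''
    · right; rw [Set.mem_singleton_iff]; exact h''

lemma lr_RP_iff {n : ℕ} (h : ∃ s ∈ S, s ≤ n) :
    (lrOutcome S hS n = Outcome.R ∨ lrOutcome S hS n = Outcome.P) ↔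
      ∀ s ∈ S, s ≤ n →
        (lrOutcome S hS (n - s) = Outcome.R ∨ lrOutcome S hS (n - s) = Outcome.N) := by
  rw [lr_nonterm S hS h, fo_RN _ (optSet_nonempty S hS h)]
  constructor
  · intro hsub s hs hsn
    have := hsub ⟨s, hs, hsn, rfl⟩
    rcases this with h' | h'
    · left; exact h'
    · right; rwa [Set.mem_singleton_iff] at h'
  · rintro h' o ⟨s, hs, hsn, rfl⟩
    rcases h' s hs hsn with h'' | h''
    · left; exact h''
    · right; rw [Set.mem_singleton_iff]; exact h''

end Char

lemma not_RP (o : Outcome) :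
    ¬(o = Outcome.R ∨ o = Outcome.P) ↔ (o = Outcome.L ∨ o = Outcome.N) := by
  cases o <;> decide

lemma not_LP (o : Outcome) :
    ¬(o = Outcome.L ∨ o = Outcome.P) ↔ (o = Outcome.R ∨ o = Outcome.N) := by
  cases o <;> decide

/-- the "misère-flavoured" predicate -/
def AAp (S : Set ℕ) (hS : ∀ s ∈ S, 2 ≤ s) (n : ℕ) : Prop :=
  (Even n → (lrOutcome S hS n = Outcome.L ∨ lrOutcome S hS n = Outcome.P)) ∧
  (¬ Even n → (lrOutcome S hS n = Outcome.R ∨ lrOutcome S hS n = Outcome.P))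

/-- the "normal-flavoured" predicate -/
def BBp (S : Set ℕ) (hS : ∀ s ∈ S, 2 ≤ s) (n : ℕ) : Prop :=
  (Even n → (lrOutcome S hS n = Outcome.R ∨ lrOutcome S hS n = Outcome.P)) ∧
  (¬ Even n → (lrOutcome S hS n = Outcome.L ∨ lrOutcome S hS n = Outcome.P))

section Odd

variable (S : Set ℕ) (hS : ∀ s ∈ S, 2 ≤ s)

lemma AAp_even {n : ℕ} (he : Even n) :
    AAp S hS n ↔ (lrOutcome S hS n = Outcome.L ∨ lrOutcome S hS n = Outcome.P) :=
  ⟨fun h => h.1 he, fun h => ⟨fun _ => h, fun hn => absurd he hn⟩⟩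

lemma AAp_odd {n : ℕ} (he : ¬ Even n) :
    AAp S hS n ↔ (lrOutcome S hS n = Outcome.R ∨ lrOutcome S hS n = Outcome.P) :=
  ⟨fun h => h.2 he, fun h => ⟨fun h' => absurd h' he, fun _ => h⟩⟩

lemma BBp_even {n : ℕ} (he : Even n) :
    BBp S hS n ↔ (lrOutcome S hS n = Outcome.R ∨ lrOutcome S hS n = Outcome.P) :=
  ⟨fun h => h.1 he, fun h => ⟨fun _ => h, fun hn => absurd he hn⟩⟩

lemma BBp_odd {n : ℕ} (he : ¬ Even n) :
    BBp S hS n ↔ (lrOutcome S hS n = Outcome.L ∨ lrOutcome S hS n = Outcome.P) :=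
  ⟨fun h => h.2 he, fun h => ⟨fun h' => absurd h' he, fun _ => h⟩⟩

variable {m : ℕ} (hm : m ∈ S) (hmin : ∀ s ∈ S, m ≤ s)

include hm hmin

lemma nt_iff {n : ℕ} : (∃ s ∈ S, s ≤ n) ↔ m ≤ n :=
  ⟨fun ⟨s, hs, hsn⟩ => le_trans (hmin s hs) hsn, fun h => ⟨m, hm, h⟩⟩

lemma AA_term {n : ℕ} (h : n < m) : AAp S hS n := by
  have ht : ¬ ∃ s ∈ S, s ≤ n := by rw [nt_iff S hm hmin]; omega
  constructor
  · intro he; left; rw [lr_term S hS ht, if_pos he]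
  · intro he; left; rw [lr_term S hS ht, if_neg he]

lemma BB_term {n : ℕ} (h : n < m) : ¬ BBp S hS n := by
  have ht : ¬ ∃ s ∈ S, s ≤ n := by rw [nt_iff S hm hmin]; omega
  rintro ⟨h1, h2⟩
  by_cases he : Even n
  · rcases h1 he with h' | h' <;>
      (rw [lr_term S hS ht, if_pos he] at h'; exact Outcome.noConfusion h')
  · rcases h2 he with h' | h' <;>
      (rw [lr_term S hS ht, if_neg he] at h'; exact Outcome.noConfusion h')

variable (hodd : ∀ s ∈ S, ¬ Even s)

include hodd

lemma AA_rec {n : ℕ} (h : m ≤ n) :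
    AAp S hS n ↔ ∀ s ∈ S, s ≤ n → ¬ AAp S hS (n - s) := by
  have hnt : ∃ s ∈ S, s ≤ n := (nt_iff S hm hmin).mpr h
  by_cases he : Even n
  · rw [AAp_even S hS he, lr_LP_iff S hS hnt]
    have point : ∀ s ∈ S, s ≤ n →
        ((lrOutcome S hS (n-s) = Outcome.L ∨ lrOutcome S hS (n-s) = Outcome.N) ↔
          ¬ AAp S hS (n - s)) := by
      intro s hs hsn
      have hodd' : ¬ Even (n - s) := by
        rw [Nat.even_sub hsn]
        intro hiff
        exact hodd s hs (hiff.mp he)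
      rw [AAp_odd S hS hodd', not_RP]
    exact ⟨fun h' s hs hsn => (point s hs hsn).mp (h' s hs hsn),
           fun h' s hs hsn => (point s hs hsn).mpr (h' s hs hsn)⟩
  · rw [AAp_odd S hS he, lr_RP_iff S hS hnt]
    have point : ∀ s ∈ S, s ≤ n →
        ((lrOutcome S hS (n-s) = Outcome.R ∨ lrOutcome S hS (n-s) = Outcome.N) ↔
          ¬ AAp S hS (n - s)) := by
      intro s hs hsn
      have hev' : Even (n - s) := by
        rw [Nat.even_sub hsn]
        exact iff_of_false he (hodd s hs)
      rw [AAp_even S hS hev', not_LP]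
    exact ⟨fun h' s hs hsn => (point s hs hsn).mp (h' s hs hsn),
           fun h' s hs hsn => (point s hs hsn).mpr (h' s hs hsn)⟩

lemma BB_rec {n : ℕ} (h : m ≤ n) :
    BBp S hS n ↔ ∀ s ∈ S, s ≤ n → ¬ BBp S hS (n - s) := by
  have hnt : ∃ s ∈ S, s ≤ n := (nt_iff S hm hmin).mpr h
  by_cases he : Even n
  · rw [BBp_even S hS he, lr_RP_iff S hS hnt]
    have point : ∀ s ∈ S, s ≤ n →
        ((lrOutcome S hS (n-s) = Outcome.R ∨ lrOutcome S hS (n-s) = Outcome.N) ↔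
          ¬ BBp S hS (n - s)) := by
      intro s hs hsn
      have hodd' : ¬ Even (n - s) := by
        rw [Nat.even_sub hsn]
        intro hiff
        exact hodd s hs (hiff.mp he)
      rw [BBp_odd S hS hodd', not_LP]
    exact ⟨fun h' s hs hsn => (point s hs hsn).mp (h' s hs hsn),
           fun h' s hs hsn => (point s hs hsn).mpr (h' s hs hsn)⟩
  · rw [BBp_odd S hS he, lr_LP_iff S hS hnt]
    have point : ∀ s ∈ S, s ≤ n →
        ((lrOutcome S hS (n-s) = Outcome.L ∨ lrOutcome S hS (n-s) = Outcome.N) ↔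
          ¬ BBp S hS (n - s)) := by
      intro s hs hsn
      have hev' : Even (n - s) := by
        rw [Nat.even_sub hsn]
        exact iff_of_false he (hodd s hs)
      rw [BBp_even S hS hev', not_RP]
    exact ⟨fun h' s hs hsn => (point s hs hsn).mp (h' s hs hsn),
           fun h' s hs hsn => (point s hs hsn).mpr (h' s hs hsn)⟩

lemma inv_BA : ∀ n, BBp S hS n → m ≤ n ∧ AAp S hS (n - m) := by
  intro n
  induction n using Nat.strong_induction_on with
  | _ n IH =>
    intro hB
    have hmn : m ≤ n := by
      by_contra h
      exact BB_term S hS hm hmin (by omega) hB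
    refine ⟨hmn, ?_⟩
    by_cases h2 : m ≤ n - m
    · rw [AA_rec S hS hm hmin hodd h2]
      intro s' hs' hs'le hAA
      have hs'n : s' ≤ n := le_trans hs'le (Nat.sub_le n m)
      have hnB : ¬ BBp S hS (n - s') :=
        (BB_rec S hS hm hmin hodd hmn).mp hB s' hs' hs'n
      have hms' : 2 ≤ s' := hS s' hs'
      have hnt2 : m ≤ n - s' := by omega
      rw [BB_rec S hS hm hmin hodd hnt2] at hnB
      push_neg at hnB
      obtain ⟨σ, hσ, hσle, hBσ⟩ := hnB
      have hσ2 : 2 ≤ σ := hS σ hσ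
      have hlt : n - s' - σ < n := by omega
      obtain ⟨hmσ, hAσ⟩ := IH _ hlt hBσ
      have hσq : σ ≤ n - m - s' := by omega
      have hq : m ≤ n - m - s' := le_trans (hmin σ hσ) hσq
      have hcon := (AA_rec S hS hm hmin hodd hq).mp hAA σ hσ hσq
      apply hcon
      have heq : n - m - s' - σ = n - s' - σ - m := by omega
      rw [heq]
      exact hAσ
    · exact AA_term S hS hm hmin (by omega)

lemma noP : ∀ n, lrOutcome S hS n ≠ Outcome.P := by
  intro n hP
  by_cases hmn : m ≤ n
  · have hA : AAp S hS n := ⟨fun _ => Or.inr hP, fun _ => Or.inr hP⟩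
    have hB : BBp S hS n := ⟨fun _ => Or.inr hP, fun _ => Or.inr hP⟩
    obtain ⟨-, hAm⟩ := inv_BA S hS hm hmin hodd n hB
    exact (AA_rec S hS hm hmin hodd hmn).mp hA m hm hmn hAm
  · have ht : ¬ ∃ s ∈ S, s ≤ n := by rw [nt_iff S hm hmin]; omega
    rw [lr_term S hS ht] at hP
    split_ifs at hP

end Odd

section Per

variable (S : Set ℕ) (hS : ∀ s ∈ S, 2 ≤ s)

lemma per_iter {A : ℕ} (hper : ∀ n, A ≤ n → lrOutcome S hS (n+2) = lrOutcome S hS n) :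
    ∀ k n, A ≤ n → lrOutcome S hS (n + 2*k) = lrOutcome S hS n := by
  intro k
  induction k with
  | zero => intro n _; norm_num
  | succ k ih =>
    intro n hn
    have h1 : n + 2*(k+1) = (n + 2*k) + 2 := by ring
    rw [h1, hper _ (by omega), ih n hn]

lemma par_eq {A : ℕ} (hper : ∀ n, A ≤ n → lrOutcome S hS (n+2) = lrOutcome S hS n) :
    ∀ n₁ n₂, A ≤ n₁ → A ≤ n₂ → n₁ % 2 = n₂ % 2 → lrOutcome S hS n₁ = lrOutcome S hS n₂ := by
  have main : ∀ n₁ n₂, A ≤ n₁ → n₁ ≤ n₂ → n₁ % 2 = n₂ % 2 →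
      lrOutcome S hS n₂ = lrOutcome S hS n₁ := by
    intro n₁ n₂ h1 hle hp
    obtain ⟨k, rfl⟩ : ∃ k, n₂ = n₁ + 2*k := ⟨(n₂ - n₁)/2, by omega⟩
    exact per_iter S hS hper k n₁ h1
  intro n₁ n₂ h1 h2 hp
  rcases le_total n₁ n₂ with h | h
  · exact (main n₁ n₂ h1 h hp).symm
  · exact main n₂ n₁ h2 h hp.symm

end Per

theorem stmt15 (S : Set ℕ) (hS : ∀ s ∈ S, 2 ≤ s) (hfin : S.Finite) (hne : S.Nonempty) :
    -- no eventual alternation between `L` and `N` with period 2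
    (¬ ∃ A : ℕ,
      (∀ n, A ≤ n → lrOutcome S hS (n + 2) = lrOutcome S hS n) ∧
      (∀ n, A ≤ n →
        lrOutcome S hS n = Outcome.L ∨ lrOutcome S hS n = Outcome.N) ∧
      (∃ n, A ≤ n ∧ lrOutcome S hS n = Outcome.L) ∧
      (∃ n, A ≤ n ∧ lrOutcome S hS n = Outcome.N)) ∧
    -- consequently, if the minimum eventual period is 2, only `L` and `R` occur eventually
    (∀ A : ℕ, (∀ n, A ≤ n → lrOutcome S hS (n + 2) = lrOutcome S hS n) →
      (¬ ∀ n, A ≤ n → lrOutcome S hS (n + 1) = lrOutcome S hS n) →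
      ∃ B : ℕ, ∀ n, B ≤ n →
        lrOutcome S hS n = Outcome.L ∨ lrOutcome S hS n = Outcome.R) := by
  have hFne : hfin.toFinset.Nonempty := hfin.toFinset_nonempty.mpr hne
  set m := hfin.toFinset.min' hFne with hmdef
  have hm : m ∈ S := hfin.mem_toFinset.mp (hfin.toFinset.min'_mem hFne)
  have hmin : ∀ s ∈ S, m ≤ s := fun s hs =>
    hfin.toFinset.min'_le s (hfin.mem_toFinset.mpr hs)
  set M := hfin.toFinset.max' hFne with hMdef
  have hM : M ∈ S := hfin.mem_toFinset.mp (hfin.toFinset.max'_mem hFne)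
  have hmax : ∀ s ∈ S, s ≤ M := fun s hs =>
    hfin.toFinset.le_max' s (hfin.mem_toFinset.mpr hs)
  have hm2 : 2 ≤ m := hS m hm
  have hmM : m ≤ M := hmin M hM
  constructor
  · -- part 1
    rintro ⟨A, hper, hval, -, nN, hnN, hN⟩
    have hONn : lrOutcome S hS (nN + 2*M) = lrOutcome S hS nN :=
      per_iter S hS hper M nN hnN
    have hnt : ∃ s ∈ S, s ≤ nN + 2*M := ⟨m, hm, by omega⟩
    have hsub : {o | ∃ s ∈ S, s ≤ nN + 2*M ∧ o = lrOutcome S hS (nN + 2*M - s)} ⊆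
        {Outcome.L, Outcome.N} := by
      rintro o ⟨s, hs, hsn, rfl⟩
      have hsM := hmax s hs
      have hA : A ≤ nN + 2*M - s := by omega
      simp only [Set.mem_insert_iff, Set.mem_singleton_iff]
      exact hval _ hA
    have hne' := optSet_nonempty S hS hnt
    have hnotN := fo_ne_N _ hne' hsub
    rw [← lr_nonterm S hS hnt] at hnotN
    exact hnotN (hONn.trans hN)
  · -- part 2
    intro A hper hnot1
    push_neg at hnot1
    obtain ⟨n₀, hn₀, hab⟩ := hnot1
    by_cases hoc : ∃ s ∈ S, ¬ Even s
    · by_cases hec : ∃ s ∈ S, Even s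
      · -- mixed parities: impossible (period would be 1)
        exfalso
        obtain ⟨s₀, hs₀S, hs₀e⟩ := hec
        obtain ⟨s₁, hs₁S, hs₁o⟩ := hoc
        have hs₀M := hmax s₀ hs₀S
        have hs₁M := hmax s₁ hs₁S
        have e0 := Nat.even_iff.mp hs₀e
        have e1 := Nat.not_even_iff.mp hs₁o
        have hTn : ∀ n, A + M ≤ n →
            {o | ∃ s ∈ S, s ≤ n ∧ o = lrOutcome S hS (n - s)} =
              {lrOutcome S hS (n - s₀), lrOutcome S hS (n - s₁)} := by
          intro n hn
          ext o
          simp only [Set.mem_setOf_eq, Set.mem_insert_iff, Set.mem_singleton_iff]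
          constructor
          · rintro ⟨s, hs, hsn, rfl⟩
            have hsM := hmax s hs
            by_cases hse : Even s
            · left
              apply par_eq S hS hper _ _ (by omega) (by omega)
              have e2 := Nat.even_iff.mp hse
              omega
            · right
              apply par_eq S hS hper _ _ (by omega) (by omega)
              have e2 := Nat.not_even_iff.mp hse
              omega
          · rintro (rfl | rfl)
            · exact ⟨s₀, hs₀S, by omega, rfl⟩
            · exact ⟨s₁, hs₁S, by omega, rfl⟩
        have h1 : A + M ≤ n₀ + 2*M := by omega
        have h2 : A + M ≤ n₀ + 2*M + 1 := by omega
        have hnt1 : ∃ s ∈ S, s ≤ n₀ + 2*M := ⟨m, hm, by omega⟩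
        have hnt2 : ∃ s ∈ S, s ≤ n₀ + 2*M + 1 := ⟨m, hm, by omega⟩
        have hswap0 : lrOutcome S hS (n₀ + 2*M + 1 - s₀) = lrOutcome S hS (n₀ + 2*M - s₁) :=
          par_eq S hS hper _ _ (by omega) (by omega) (by omega)
        have hswap1 : lrOutcome S hS (n₀ + 2*M + 1 - s₁) = lrOutcome S hS (n₀ + 2*M - s₀) :=
          par_eq S hS hper _ _ (by omega) (by omega) (by omega)
        have hstep : lrOutcome S hS (n₀ + 2*M + 1) = lrOutcome S hS (n₀ + 2*M) := by
          rw [lr_nonterm S hS hnt2, lr_nonterm S hS hnt1, hTn _ h1, hTn _ h2,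
            hswap0, hswap1, Set.pair_comm]
        have ha : lrOutcome S hS (n₀ + 2*M) = lrOutcome S hS n₀ :=
          par_eq S hS hper _ _ (by omega) (by omega) (by omega)
        have hb : lrOutcome S hS (n₀ + 2*M + 1) = lrOutcome S hS (n₀ + 1) :=
          par_eq S hS hper _ _ (by omega) (by omega) (by omega)
        exact hab (by rw [← hb, hstep, ha])
      · -- all elements odd : use the no-P theorem
        exfalso
        push_neg at hec
        have hnoP := noP S hS hm hmin hec
        have hnt1 : ∃ s ∈ S, s ≤ n₀ + 2*M := ⟨m, hm, by omega⟩
        have em := Nat.not_even_iff.mp (hec m hm)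
        have hT : {o | ∃ s ∈ S, s ≤ n₀ + 2*M ∧ o = lrOutcome S hS (n₀ + 2*M - s)} =
            {lrOutcome S hS (n₀ + 1)} := by
          ext o
          simp only [Set.mem_setOf_eq, Set.mem_singleton_iff]
          constructor
          · rintro ⟨s, hs, hsn, rfl⟩
            have hsM := hmax s hs
            have e2 := Nat.not_even_iff.mp (hec s hs)
            exact par_eq S hS hper _ _ (by omega) (by omega) (by omega)
          · rintro rfl
            exact ⟨m, hm, by omega,
              (par_eq S hS hper _ _ (by omega) (by omega) (by omega))⟩
        have ha : lrOutcome S hS (n₀ + 2*M) = lrOutcome S hS n₀ :=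
          par_eq S hS hper _ _ (by omega) (by omega) (by omega)
        have key : lrOutcome S hS n₀ = fromOptions {lrOutcome S hS (n₀ + 1)} := by
          rw [← ha, lr_nonterm S hS hnt1, hT]
        have hbP := hnoP (n₀ + 1)
        have haP := hnoP n₀
        cases hcb : lrOutcome S hS (n₀ + 1) with
        | L => rw [hcb, fo_singL] at key; exact hab (hcb.trans key.symm)
        | R => rw [hcb, fo_singR] at key; exact hab (hcb.trans key.symm)
        | N => rw [hcb, fo_singN] at key; exact haP key
        | P => exact hbP hcb
    · -- all elements even
      push_neg at hoc
      refine ⟨A, fun n hn => ?_⟩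
      have hONn : lrOutcome S hS (n + 2*M) = lrOutcome S hS n :=
        per_iter S hS hper M n hn
      have hnt1 : ∃ s ∈ S, s ≤ n + 2*M := ⟨m, hm, by omega⟩
      have em := Nat.even_iff.mp (hoc m hm)
      have hT : {o | ∃ s ∈ S, s ≤ n + 2*M ∧ o = lrOutcome S hS (n + 2*M - s)} =
          {lrOutcome S hS n} := by
        ext o
        simp only [Set.mem_setOf_eq, Set.mem_singleton_iff]
        constructor
        · rintro ⟨s, hs, hsn, rfl⟩
          have hsM := hmax s hs
          have e2 := Nat.even_iff.mp (hoc s hs)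
          exact par_eq S hS hper _ _ (by omega) (by omega) (by omega)
        · rintro rfl
          exact ⟨m, hm, by omega,
            (par_eq S hS hper _ _ (by omega) (by omega) (by omega))⟩
      have key : lrOutcome S hS n = fromOptions {lrOutcome S hS n} := by
        conv_lhs => rw [← hONn, lr_nonterm S hS hnt1]
        rw [hT]
      cases hc : lrOutcome S hS n with
      | L => left; rfl
      | R => right; rfl
      | N => rw [hc, fo_singN] at key; exact absurd key (by decide)
      | P => rw [hc, fo_singP] at key; exact absurd key (by decide)
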